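/- arXiv:1303.6695 — 2 statements merged into one kernel-verified Lean document; each statement's English description precedes it below -/
import Mathlib

section
/- Let β > 0, γ > 0, δ > 0, w ∈ ℝ and z > 0 with |w| < z^β. Then ∫_0^∞ e^{−zt} t^{γ−1} E_{β,γ}^δ(w t^β) dt = z^{βδ−γ}/(z^β − w)^δ. -/
/-!
Expand `E_{β,γ}^δ` into its power series and integrate term by term, which is legitimate
because the series of absolute values has a finite Laplace transform. The Laplace transform
of `t^{βr+γ-1}` is `Γ(βr+γ) / z^{βr+γ}`, which cancels the `Γ(βr+γ)` in the `r`-th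
coefficient and leaves `z^{-γ} Γ(δ)⁻¹ ∑ Γ(δ+r) (w/z^β)^r / r!`. Since
`Γ(δ+r) / (r! Γ(δ)) = binom(δ+r-1, r)`, this is the binomial series of `(1 - w/z^β)^{-δ}`,
convergent precisely because `|w| < z^β`.
-/

open MeasureTheory Real Filter Set

/-- Generalized (three-parameter) Mittag--Leffler function
`E_{β,γ}^δ(w) = ∑_{r≥0} Γ(δ+r) w^r / (r! Γ(βr+γ) Γ(δ))`.
The convention `1/Γ(x) = 0` at nonpositive integers is automatic since
`Real.Gamma` vanishes there and division by zero is zero. -/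
noncomputable def mlGen (β γ δ : ℝ) (w : ℝ) : ℝ :=
  ∑' r : ℕ, (Real.Gamma (δ + (r : ℝ)) * w ^ r) /
    ((r.factorial : ℝ) * Real.Gamma (β * (r : ℝ) + γ) * Real.Gamma δ)

namespace Real

theorem Gamma_add_nat_eq_ascPochhammer_mul {a : ℝ} (ha : 0 < a) (n : ℕ) :
    Gamma (a + n) = (ascPochhammer ℝ n).eval a * Gamma a := by
  induction n with
  | zero => simp
  | succ n ih =>
    have : a + n ≠ 0 := by positivity
    rw [Nat.cast_succ, ← add_assoc, Gamma_add_one this, ih, ascPochhammer_succ_eval]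
    ring

theorem choose_add_nat_sub_one_eq_Gamma_div {a : ℝ} (ha : 0 < a) (n : ℕ) :
    Ring.choose (a + n - 1) n = Gamma (a + n) / (n.factorial * Gamma a) := by
  rw [Ring.choose_eq_smul, Polynomial.descPochhammer_smeval_eq_ascPochhammer,
    Polynomial.ascPochhammer_smeval_cast, Polynomial.ascPochhammer_smeval_eq_eval,
    Gamma_add_nat_eq_ascPochhammer_mul ha, smul_eq_mul]
  have := (Gamma_pos_of_pos ha).ne'
  field_simp
  ring_nf

theorem hasSum_Gamma_add_mul_pow_div_factorial {a x : ℝ} (ha : 0 < a) (hx : |x| < 1) :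
    HasSum (fun n : ℕ => Gamma (a + n) * x ^ n / n.factorial) (Gamma a / (1 - x) ^ a) := by
  have hbinom := (one_div_one_sub_rpow_hasFPowerSeriesOnBall_zero a).hasSum (y := x)
    (by simpa [enorm_eq_nnnorm, ← NNReal.coe_lt_coe] using hx)
  simp only [FormalMultilinearSeries.ofScalars_apply_eq, smul_eq_mul, zero_add] at hbinom
  have hterm (n : ℕ) : Gamma (a + n) * x ^ n / n.factorial
      = Gamma a * (Ring.choose (a + n - 1) n * x ^ n) := by
    have := (Gamma_pos_of_pos ha).ne'
    rw [choose_add_nat_sub_one_eq_Gamma_div ha]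
    field_simp
  simpa only [hterm, mul_one_div] using hbinom.mul_left (Gamma a)

end Real

theorem integrableOn_exp_neg_mul_mul_rpow {s z : ℝ} (hs : 0 < s) (hz : 0 < z) :
    IntegrableOn (fun t : ℝ => exp (-z * t) * t ^ (s - 1)) (Ioi 0) := by
  simpa [Real.rpow_one, mul_comm] using
    integrableOn_rpow_mul_exp_neg_mul_rpow (p := 1) (s := s - 1) (by linarith) one_pos hz

theorem integral_exp_neg_mul_mul_rpow {s z : ℝ} (hs : 0 < s) (hz : 0 < z) :
    ∫ t in Ioi (0 : ℝ), exp (-z * t) * t ^ (s - 1) = Gamma s / z ^ s := by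
  have h := integral_rpow_mul_exp_neg_mul_Ioi hs hz
  rw [div_rpow zero_le_one hz.le, one_rpow] at h
  simp_rw [mul_comm (exp _), neg_mul]
  rw [h, one_div_mul_eq_div]

theorem integral_exp_neg_mul_mul_tsum_rpow {c s : ℕ → ℝ} {z : ℝ} (hz : 0 < z)
    (hs : ∀ r, 0 < s r) (hsum : Summable fun r => |c r| * Gamma (s r) / z ^ s r) :
    ∫ t in Ioi (0 : ℝ), exp (-z * t) * ∑' r, c r * t ^ (s r - 1)
      = ∑' r, c r * Gamma (s r) / z ^ s r := by
  set F : ℕ → ℝ → ℝ := fun r t => c r * (exp (-z * t) * t ^ (s r - 1))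
  have hF_int (r : ℕ) : IntegrableOn (F r) (Ioi 0) :=
    (integrableOn_exp_neg_mul_mul_rpow (hs r) hz).const_mul _
  have hF_integral (r : ℕ) : ∫ t in Ioi (0 : ℝ), F r t = c r * Gamma (s r) / z ^ s r := by
    rw [integral_const_mul, integral_exp_neg_mul_mul_rpow (hs r) hz, mul_div_assoc]
  have hF_norm (r : ℕ) : ∫ t in Ioi (0 : ℝ), ‖F r t‖ = |c r| * Gamma (s r) / z ^ s r := by
    have : ∀ t ∈ Ioi (0 : ℝ), ‖F r t‖ = |c r| * (exp (-z * t) * t ^ (s r - 1)) :=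
      fun t (ht : 0 < t) => by
        rw [norm_mul, Real.norm_eq_abs, Real.norm_of_nonneg (by positivity)]
    rw [setIntegral_congr_fun measurableSet_Ioi this, integral_const_mul,
      integral_exp_neg_mul_mul_rpow (hs r) hz, mul_div_assoc]
  have hswap := integral_tsum_of_summable_integral_norm hF_int (by simpa only [hF_norm])
  simp_rw [← tsum_mul_left (a := exp (-z * _)), mul_left_comm (exp _)]
  rw [← hswap]
  exact tsum_congr hF_integral

noncomputable def mlCoeff (β γ δ : ℝ) (r : ℕ) : ℝ :=
  Gamma (δ + r) / (r.factorial * Gamma (β * r + γ) * Gamma δ)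

theorem mlCoeff_nonneg {β γ δ : ℝ} (hβ : 0 ≤ β) (hγ : 0 ≤ γ) (hδ : 0 ≤ δ) (r : ℕ) :
    0 ≤ mlCoeff β γ δ r := by
  have := Gamma_nonneg_of_nonneg (s := δ + r) (by positivity)
  have := Gamma_nonneg_of_nonneg (s := β * r + γ) (by positivity)
  have := Gamma_nonneg_of_nonneg hδ
  unfold mlCoeff
  positivity

theorem mlGen_eq_tsum (β γ δ w : ℝ) : mlGen β γ δ w = ∑' r, mlCoeff β γ δ r * w ^ r :=
  tsum_congr fun r => by rw [mlCoeff, div_mul_eq_mul_div]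

theorem rpow_mul_mlGen_mul_rpow (β γ δ w : ℝ) {t : ℝ} (ht : 0 < t) :
    t ^ (γ - 1) * mlGen β γ δ (w * t ^ β)
      = ∑' r : ℕ, mlCoeff β γ δ r * w ^ r * t ^ (β * r + γ - 1) := by
  rw [mlGen_eq_tsum, ← tsum_mul_left]
  refine tsum_congr fun r => ?_
  rw [show β * r + γ - 1 = (γ - 1) + β * r by ring, rpow_add ht, rpow_mul ht.le, rpow_natCast,
    mul_pow]
  ring

theorem mlCoeff_mul_Gamma_div_rpow {β γ δ w z : ℝ} (hβ : 0 ≤ β) (hγ : 0 < γ) (hz : 0 < z)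
    (r : ℕ) :
    mlCoeff β γ δ r * w ^ r * Gamma (β * r + γ) / z ^ (β * r + γ)
      = Gamma (δ + r) * (w / z ^ β) ^ r / r.factorial / (Gamma δ * z ^ γ) := by
  have : Gamma (β * r + γ) ≠ 0 := (Gamma_pos_of_pos (by positivity)).ne'
  rw [mlCoeff, rpow_add hz, rpow_mul hz.le, rpow_natCast, div_pow]
  field_simp

/-- Laplace transform of `t^{γ−1} E_{β,γ}^δ(w t^β)`:
`∫_0^∞ e^{−zt} t^{γ−1} E_{β,γ}^δ(w t^β) dt = z^{βδ−γ}/(z^β − w)^δ`. -/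
theorem stmt_1 (β γ δ w z : ℝ) (hβ : 0 < β) (hγ : 0 < γ) (hδ : 0 < δ)
    (hz : 0 < z) (hw : |w| < z ^ β) :
    ∫ t in Set.Ioi (0 : ℝ), Real.exp (-z * t) * t ^ (γ - 1) * mlGen β γ δ (w * t ^ β)
      = z ^ (β * δ - γ) / (z ^ β - w) ^ δ := by
  have hzβ : 0 < z ^ β := rpow_pos_of_pos hz β
  have hratio (v : ℝ) (hv : |v| ≤ |w|) : |v / z ^ β| < 1 := by
    rw [abs_div, abs_of_pos hzβ, div_lt_one hzβ]
    exact hv.trans_lt hw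
  have hsum : Summable fun r : ℕ =>
      |mlCoeff β γ δ r * w ^ r| * Gamma (β * r + γ) / z ^ (β * r + γ) := by
    simp_rw [abs_mul, abs_of_nonneg (mlCoeff_nonneg hβ.le hγ.le hδ.le _), abs_pow,
      mlCoeff_mul_Gamma_div_rpow hβ.le hγ hz]
    exact ((hasSum_Gamma_add_mul_pow_div_factorial hδ
      (hratio |w| (abs_abs w).le)).div_const _).summable
  rw [setIntegral_congr_fun measurableSet_Ioi fun t (ht : 0 < t) => by
      rw [mul_assoc, rpow_mul_mlGen_mul_rpow β γ δ w ht],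
    integral_exp_neg_mul_mul_tsum_rpow hz (fun r => by positivity) hsum]
  simp_rw [mlCoeff_mul_Gamma_div_rpow hβ.le hγ hz]
  rw [tsum_div_const, (hasSum_Gamma_add_mul_pow_div_factorial hδ (hratio w le_rfl)).tsum_eq]
  have hzw : 0 < z ^ β - w := by linarith [le_abs_self w]
  have := (Gamma_pos_of_pos hδ).ne'
  rw [one_sub_div hzβ.ne', div_rpow hzw.le hzβ.le, ← rpow_mul hz.le, rpow_sub hz]
  field_simp
end

section
/- Let θ > 0, α ∈ (0,1) and t > 0. Then the function t ↦ E_{α,1}(−θ t^α) is differentiable at t with derivative d/dt E_{α,1}(−θ t^α) = −θ t^{α−1} E_{α,α}(−θ t^α). -/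
/-!
Differentiating the series termwise gives `E_{α,1}' = E_{α,α} / α`, because
`Γ(α(r+1)+1) = α(r+1) Γ(αr+α)`; the chain rule through `u ↦ -θ u^α` then yields the formula.
Termwise differentiation is justified by local domination by `(2R)^r / Γ(αr+1)`, summable since
log-convexity of `Γ` gives `Γ(x) / Γ(x+α) ≤ 2 (x+α)^(-α) → 0`, so the coefficients `1/Γ(αr+γ)`
have infinite radius of convergence by the ratio test.
-/

open MeasureTheory Real Filter Set

/-- Two-parameter Mittag--Leffler function `E_{β,γ}(w) = ∑_{r≥0} w^r / Γ(βr+γ)`. -/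
noncomputable def ml (β γ : ℝ) (w : ℝ) : ℝ :=
  ∑' r : ℕ, w ^ r / Real.Gamma (β * (r : ℝ) + γ)

open FormalMultilinearSeries Topology

/-- Log-convexity of `Γ` between `x + a` and `x + a + 1`, whose weighted mean is `x + 1`. -/
theorem mul_Gamma_le_Gamma_add_mul_rpow {a x : ℝ} (ha0 : 0 < a) (ha1 : a < 1) (hx : 0 < x) :
    x * Gamma x ≤ Gamma (x + a) * (x + a) ^ (1 - a) := by
  have hxa : 0 < x + a := by linarith
  have hconv := Gamma_mul_add_mul_le_rpow_Gamma_mul_rpow_Gamma (s := x + a) (t := x + a + 1)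
    hxa (by linarith) ha0 (by linarith : 0 < 1 - a) (by ring)
  rw [show a * (x + a) + (1 - a) * (x + a + 1) = x + 1 by ring, Gamma_add_one hx.ne',
    Gamma_add_one hxa.ne'] at hconv
  have hΓ : 0 < Gamma (x + a) := Gamma_pos_of_pos hxa
  calc x * Gamma x ≤ Gamma (x + a) ^ a * ((x + a) * Gamma (x + a)) ^ (1 - a) := hconv
    _ = Gamma (x + a) * (x + a) ^ (1 - a) := by
      rw [mul_rpow hxa.le hΓ.le, mul_left_comm, ← rpow_add hΓ, add_sub_cancel, rpow_one,
        mul_comm]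

theorem tendsto_Gamma_div_Gamma_add_atTop {a : ℝ} (ha0 : 0 < a) (ha1 : a < 1) :
    Tendsto (fun x => Gamma x / Gamma (x + a)) atTop (𝓝 0) := by
  have hlim : Tendsto (fun x : ℝ => 2 * (x + a) ^ (-a)) atTop (𝓝 0) := by
    simpa using ((tendsto_rpow_neg_atTop ha0).comp
      (tendsto_atTop_add_const_right _ a tendsto_id)).const_mul 2
  have hnonneg : ∀ᶠ x in atTop, 0 ≤ Gamma x / Gamma (x + a) := by
    filter_upwards [eventually_gt_atTop 0] with x hx
    exact div_nonneg (Gamma_pos_of_pos hx).le (Gamma_pos_of_pos (by linarith)).le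
  have hbound : ∀ᶠ x in atTop, Gamma x / Gamma (x + a) ≤ 2 * (x + a) ^ (-a) := by
    filter_upwards [eventually_ge_atTop a] with x hx
    have hx0 : 0 < x := ha0.trans_le hx
    have hxa : 0 < x + a := by linarith
    have hsplit : (x + a) ^ (1 - a) = (x + a) ^ (-a) * (x + a) := by
      rw [sub_eq_neg_add, rpow_add hxa, rpow_one]
    have hkey := mul_Gamma_le_Gamma_add_mul_rpow ha0 ha1 hx0
    rw [hsplit] at hkey
    rw [div_le_iff₀ (Gamma_pos_of_pos hxa)]
    refine le_of_mul_le_mul_left ?_ hx0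
    calc x * Gamma x ≤ Gamma (x + a) * ((x + a) ^ (-a) * (x + a)) := hkey
      _ ≤ Gamma (x + a) * ((x + a) ^ (-a) * (2 * x)) := by gcongr; linarith
      _ = x * (2 * (x + a) ^ (-a) * Gamma (x + a)) := by ring
  exact tendsto_of_tendsto_of_tendsto_of_le_of_le' tendsto_const_nhds hlim hnonneg hbound

theorem summable_pow_div_Gamma {α : ℝ} (hα0 : 0 < α) (hα1 : α < 1) (γ w : ℝ) :
    Summable fun r : ℕ => w ^ r / Gamma (α * r + γ) := by
  let c : ℕ → ℝ := fun r => (Gamma (α * r + γ))⁻¹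
  have harg : Tendsto (fun r : ℕ => α * r + γ) atTop atTop :=
    tendsto_atTop_add_const_right _ _ (tendsto_natCast_atTop_atTop.const_mul_atTop hα0)
  have hpos : ∀ᶠ r : ℕ in atTop, 0 < α * r + γ := harg.eventually_gt_atTop 0
  have hradius : (ofScalars ℝ c).radius = ⊤ := by
    refine ofScalars_radius_eq_top_of_tendsto ℝ c
      (hpos.mono fun r hr => inv_ne_zero (Gamma_pos_of_pos hr).ne') ?_
    refine ((tendsto_Gamma_div_Gamma_add_atTop hα0 hα1).comp harg).congr' ?_
    filter_upwards [hpos] with r hr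
    have hr' : 0 < α * r + γ + α := by linarith
    have e : α * ((r.succ : ℕ) : ℝ) + γ = α * r + γ + α := by push_cast; ring
    simp only [Function.comp_apply, c, e, norm_inv, norm_of_nonneg (Gamma_pos_of_pos hr).le,
      norm_of_nonneg (Gamma_pos_of_pos hr').le, inv_div_inv]
  refine (summable_norm_apply (ofScalars ℝ c) (x := w) (by simp [hradius])).of_norm.congr
    fun r => ?_
  simp only [ofScalars_apply_eq, c, smul_eq_mul, div_eq_inv_mul]

theorem natCast_mul_pow_pred_le {y R : ℝ} (hyR : |y| ≤ R) (hR : 1 ≤ R) (r : ℕ) :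
    r * |y| ^ (r - 1) ≤ (2 * R) ^ r :=
  calc r * |y| ^ (r - 1) ≤ 2 ^ r * R ^ r := by
        gcongr
        · exact_mod_cast r.lt_two_pow_self.le
        · exact (pow_le_pow_left₀ (abs_nonneg y) hyR _).trans (pow_le_pow_right₀ hR (r.sub_le 1))
    _ = (2 * R) ^ r := (mul_pow 2 R r).symm

theorem hasDerivAt_ml_one {α : ℝ} (hα0 : 0 < α) (hα1 : α < 1) (w : ℝ) :
    HasDerivAt (ml α 1) (ml α α w / α) w := by
  set R := |w| + 1
  have hw : w ∈ Ioo (-R) R := abs_lt.1 (lt_add_one _)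
  have hΓ : ∀ r : ℕ, 0 < Gamma (α * r + 1) := fun r => Gamma_pos_of_pos (by positivity)
  have hbound : ∀ (r : ℕ), ∀ y ∈ Ioo (-R) R,
      ‖r * y ^ (r - 1) / Gamma (α * r + 1)‖ ≤ (2 * R) ^ r / Gamma (α * r + 1) := by
    intro r y hy
    rw [norm_div, norm_mul, norm_pow, Real.norm_natCast, Real.norm_eq_abs, Real.norm_eq_abs,
      abs_of_pos (hΓ r)]
    gcongr
    exact natCast_mul_pow_pred_le (abs_lt.2 hy).le (by simp [R]) r
  have hderiv := hasDerivAt_tsum_of_isPreconnected (summable_pow_div_Gamma hα0 hα1 1 (2 * R))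
    isOpen_Ioo isPreconnected_Ioo (fun r y _ => (hasDerivAt_pow r y).div_const _) hbound hw
    (summable_pow_div_Gamma hα0 hα1 1 w) hw
  refine hderiv.congr_deriv ?_
  have hsucc : ∀ r : ℕ, ((r + 1 : ℕ) : ℝ) * w ^ (r + 1 - 1) / Gamma (α * (r + 1 : ℕ) + 1)
      = w ^ r / Gamma (α * r + α) / α := by
    intro r
    have hr : α * r + α ≠ 0 := by positivity
    rw [Nat.add_sub_cancel, Nat.cast_succ, mul_add_one, Gamma_add_one hr]
    field_simp
  rw [(Summable.of_norm_bounded (summable_pow_div_Gamma hα0 hα1 1 (2 * R))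
    fun r => hbound r w hw).tsum_eq_zero_add, tsum_congr hsucc, tsum_div_const]
  simp [ml]

theorem stmt_10_general (θ α t : ℝ) (hα : α ∈ Set.Ioo (0 : ℝ) 1) (ht : 0 < t) :
    HasDerivAt (fun u : ℝ => ml α 1 (-θ * u ^ α))
      (-θ * t ^ (α - 1) * ml α α (-θ * t ^ α)) t := by
  have hinner : HasDerivAt (fun u : ℝ => -θ * u ^ α) (-θ * (α * t ^ (α - 1))) t :=
    (hasDerivAt_rpow_const (Or.inl ht.ne')).const_mul (-θ)
  refine ((hasDerivAt_ml_one hα.1 hα.2 _).comp t hinner).congr_deriv ?_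
  field_simp [hα.1.ne']

/-- Derivative of the Mittag--Leffler survival function:
`d/dt E_{α,1}(−θ t^α) = −θ t^{α−1} E_{α,α}(−θ t^α)` for `t > 0`. -/
theorem stmt_10 (θ α t : ℝ) (hθ : 0 < θ) (hα : α ∈ Set.Ioo (0 : ℝ) 1) (ht : 0 < t) :
    HasDerivAt (fun u : ℝ => ml α 1 (-θ * u ^ α))
      (-θ * t ^ (α - 1) * ml α α (-θ * t ^ α)) t :=
  stmt_10_general θ α t hα ht
end
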